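/- arXiv:1410.2747 — 2 statements merged into one kernel-verified Lean document; each statement's English description precedes it below -/
import Mathlib

section
/- Let G be an abelian transcendental semigroup (a semigroup, under composition, of transcendental entire functions in which every two elements commute). Then the escaping set I(G) is backward invariant under G: for every g ∈ G, g⁻¹(I(G)) ⊆ I(G), i.e. whenever g(w) ∈ I(G) one has w ∈ I(G). -/
open Filter Topology Set Function

noncomputable section

/-- An entire (everywhere differentiable) function that is not a polynomial. -/
def TranscendentalEntire (f : ℂ → ℂ) : Prop :=
  Differentiable ℂ f ∧ ¬ ∃ p : Polynomial ℂ, ∀ z, f z = p.eval z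

/-- A transcendental semigroup: a nonempty set of transcendental entire functions
closed under composition. -/
def IsTranscendentalSemigroup (G : Set (ℂ → ℂ)) : Prop :=
  G.Nonempty ∧ (∀ f ∈ G, TranscendentalEntire f) ∧ ∀ f ∈ G, ∀ g ∈ G, f ∘ g ∈ G

/-- The semigroup is abelian: any two elements commute under composition. -/
def IsAbelianSemigroup (G : Set (ℂ → ℂ)) : Prop :=
  ∀ f ∈ G, ∀ g ∈ G, f ∘ g = g ∘ f

/-- The escaping set of a semigroup `G`: points at which every sequence in `G`
has a subsequence diverging to infinity. -/
def escapingSet (G : Set (ℂ → ℂ)) : Set ℂ :=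
  {z | ∀ s : ℕ → ℂ → ℂ, (∀ k, s k ∈ G) →
    ∃ φ : ℕ → ℕ, StrictMono φ ∧
      Tendsto (fun j => ‖s (φ j) z‖) atTop atTop}

/-- A sequence of functions diverges to ∞ locally uniformly on `U`. -/
def DivergesLocallyUniformlyOn (F : ℕ → ℂ → ℂ) (U : Set ℂ) : Prop :=
  ∀ K ⊆ U, IsCompact K → ∀ R > (0 : ℝ), ∀ᶠ n in atTop, ∀ w ∈ K, R < ‖F n w‖

/-- The Fatou set of a family `G` of entire functions. -/
def FatouSet (G : Set (ℂ → ℂ)) : Set ℂ :=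
  {z | ∃ U : Set ℂ, IsOpen U ∧ z ∈ U ∧ ∀ s : ℕ → ℂ → ℂ, (∀ k, s k ∈ G) →
    ∃ φ : ℕ → ℕ, StrictMono φ ∧
      ((∃ h : ℂ → ℂ, DifferentiableOn ℂ h U ∧
          TendstoLocallyUniformlyOn (fun j => s (φ j)) h atTop U) ∨
        DivergesLocallyUniformlyOn (fun j => s (φ j)) U)}

/-- The Julia set of a family `G`, the complement in `ℂ` of the Fatou set. -/
def JuliaSet (G : Set (ℂ → ℂ)) : Set ℂ := (FatouSet G)ᶜ

/-- The set of (positive) iterates of a single function. -/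
def iteratesSet (f : ℂ → ℂ) : Set (ℂ → ℂ) := {g | ∃ n : ℕ, 0 < n ∧ g = f^[n]}

/-- The Fatou set of a single function, defined via its iterates. -/
def FatouSetFn (f : ℂ → ℂ) : Set ℂ := FatouSet (iteratesSet f)

/-- The Julia set of a single function. -/
def JuliaSetFn (f : ℂ → ℂ) : Set ℂ := (FatouSetFn f)ᶜ

/-- The escaping set of a single function. -/
def escapingSetFn (f : ℂ → ℂ) : Set ℂ :=
  {z | Tendsto (fun n => ‖f^[n] z‖) atTop atTop}

/-- Critical values of `f`. -/
def criticalValues (f : ℂ → ℂ) : Set ℂ := {v | ∃ w, deriv f w = 0 ∧ f w = v}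

/-- Asymptotic values of `f`: limits of `f` along curves tending to infinity. -/
def asymptoticValues (f : ℂ → ℂ) : Set ℂ :=
  {v | ∃ γ : ℝ → ℂ, ContinuousOn γ (Set.Ici (0:ℝ)) ∧
    Tendsto (fun t => ‖γ t‖) atTop atTop ∧
    Tendsto (fun t => f (γ t)) atTop (nhds v)}

/-- `Sing(f⁻¹)`: closure of the set of critical and asymptotic values of `f`. -/
def SingInv (f : ℂ → ℂ) : Set ℂ := closure (criticalValues f ∪ asymptoticValues f)

/-- `f` is of bounded type: `Sing(f⁻¹)` is bounded. -/
def BoundedType (f : ℂ → ℂ) : Prop := Bornology.IsBounded (SingInv f)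

/-- The postsingular set of `f`. -/
def postSing (f : ℂ → ℂ) : Set ℂ := closure (⋃ n : ℕ, f^[n] '' SingInv f)

/-- Membership in the semigroup generated by the functions `g i`:
all finite compositions of generators. -/
inductive InGenSemigroup {n : ℕ} (g : Fin n → ℂ → ℂ) : (ℂ → ℂ) → Prop
  | base (i : Fin n) : InGenSemigroup g (g i)
  | comp (f h : ℂ → ℂ) : InGenSemigroup g f → InGenSemigroup g h → InGenSemigroup g (f ∘ h)

/-- The semigroup generated by `g 1, …, g n`. -/
def genSemigroup {n : ℕ} (g : Fin n → ℂ → ℂ) : Set (ℂ → ℂ) := {f | InGenSemigroup g f}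

/-- `U` is a connected component of the Fatou set of `G`. -/
def IsFatouComponent (G : Set (ℂ → ℂ)) (U : Set ℂ) : Prop :=
  ∃ z ∈ FatouSet G, U = connectedComponentIn (FatouSet G) z

/-- `U` is a wandering domain of `G`: a Fatou component whose images lie in
infinitely many distinct Fatou components. -/
def IsWanderingDomain (G : Set (ℂ → ℂ)) (U : Set ℂ) : Prop :=
  IsFatouComponent G U ∧
    {V : Set ℂ | ∃ g ∈ G, ∃ z ∈ U, V = connectedComponentIn (FatouSet G) (g z)}.Infinite

/-- `G` has no wandering domains. -/
def HasNoWanderingDomains (G : Set (ℂ → ℂ)) : Prop := ∀ U : Set ℂ, ¬ IsWanderingDomain G U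

/-- `z` is a rationally indifferent periodic point of `f`. -/
def IsRatIndiffPeriodic (f : ℂ → ℂ) (z : ℂ) : Prop :=
  ∃ p : ℕ, 0 < p ∧ f^[p] z = z ∧ ∃ k : ℕ, 0 < k ∧ (deriv (f^[p]) z) ^ k = 1

/-- `z` is a repelling periodic point of `f`. -/
def IsRepellingPeriodic (f : ℂ → ℂ) (z : ℂ) : Prop :=
  ∃ p : ℕ, 0 < p ∧ f^[p] z = z ∧ 1 < ‖deriv (f^[p]) z‖

/-- `ψ` is a limit function of the sequence `F` on `V`: some subsequence converges
locally uniformly to `ψ` on `V`. -/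
def IsLimitFunctionOn (F : ℕ → ℂ → ℂ) (ψ : ℂ → ℂ) (V : Set ℂ) : Prop :=
  ∃ φ : ℕ → ℕ, StrictMono φ ∧ TendstoLocallyUniformlyOn (fun j => F (φ j)) ψ atTop V

/-- `f` is hyperbolic: its postsingular set is a compact subset of its Fatou set. -/
def IsHyperbolic (f : ℂ → ℂ) : Prop :=
  IsCompact (postSing f) ∧ postSing f ⊆ FatouSetFn f

/-- The postsingular set of a semigroup `G`. -/
def postSingSemigroup (G : Set (ℂ → ℂ)) : Set ℂ := closure (⋃ f ∈ G, SingInv f)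

/-- A set `S` is finite and consists only of rationally indifferent or repelling
periodic points of `f` and preimages (under iterates of `f`) of such points. -/
def FinitePreperiodicRI (f : ℂ → ℂ) (S : Set ℂ) : Prop :=
  S.Finite ∧ ∀ w ∈ S, ∃ m : ℕ,
    IsRatIndiffPeriodic f (f^[m] w) ∨ IsRepellingPeriodic f (f^[m] w)

end

/-!
If `g` commutes with every element of `G`, then `s (g w) = g (s w)` for each `s ∈ G`. So a
subsequence with `s (φ j) (g w) → ∞` gives `g (s (φ j) w) → ∞`, and since a continuous map
sends bounded sets of `ℂ` to bounded sets, `s (φ j) w → ∞` along the same subsequence.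
-/

open Bornology

theorem Continuous.tendsto_cobounded_of_tendsto_comp {X Y ι : Type*} [PseudoMetricSpace X]
    [ProperSpace X] [PseudoMetricSpace Y] {g : X → Y} (hg : Continuous g) {z : ι → X}
    {l : Filter ι} (h : Tendsto (g ∘ z) l (cobounded Y)) : Tendsto z l (cobounded X) := by
  rw [Metric.cobounded_eq_cocompact]
  exact (tendsto_comap_iff.mpr (h.mono_right Metric.cobounded_le_cocompact)).mono_right
    (comap_cocompact_le hg)

theorem preimage_escapingSet_subset {G : Set (ℂ → ℂ)} {g : ℂ → ℂ} (hg : Continuous g)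
    (hcomm : ∀ f ∈ G, f ∘ g = g ∘ f) : g ⁻¹' escapingSet G ⊆ escapingSet G := by
  intro w hw s hs
  obtain ⟨φ, hφ, htend⟩ := hw s hs
  refine ⟨φ, hφ, ?_⟩
  have hcomm_at : ∀ j, s (φ j) (g w) = g (s (φ j) w) := fun j =>
    congrFun (hcomm _ (hs (φ j))) w
  simp only [hcomm_at, tendsto_norm_atTop_iff_cobounded] at htend ⊢
  exact hg.tendsto_cobounded_of_tendsto_comp htend

/-- For an abelian transcendental semigroup `G`, the escaping set
`I(G)` is backward invariant under `G`. -/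
theorem escapingSet_backward_invariant_of_abelian
    (G : Set (ℂ → ℂ)) (hG : IsTranscendentalSemigroup G) (hab : IsAbelianSemigroup G) :
    ∀ g ∈ G, g ⁻¹' escapingSet G ⊆ escapingSet G := fun g hg =>
  preimage_escapingSet_subset (hG.2.1 g hg).1.continuous fun f hf => hab f hf g hg
end

section
/- Let f and g be permutable transcendental entire functions of bounded type (f ∘ g = g ∘ f). Suppose f(Sing(g⁻¹)) ⊆ Sing(g⁻¹) and g(Sing(f⁻¹)) ⊆ Sing(f⁻¹). Then the postsingular sets satisfy P(f ∘ g) ⊆ P(f) ∪ P(g). -/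
open Filter Topology Set Function

/-! Every singular value of `f ∘ g` is a singular value of `f` or the `f`-image of one of `g`.
For critical values this is the chain rule. For an asymptotic value `v` along `γ`, either
`g ∘ γ → ∞`, so `v` is an asymptotic value of `f`, or `g ∘ γ` has a finite cluster point `w`
with `f w = v`. Since `v` is taken by `f` only at isolated points, `f ≠ v` on small circles
around `w`, so the continuous curve `g ∘ γ` eventually stops crossing them while it keeps
returning inside them; hence it converges to `w`. The invariance hypotheses give
`Sing((f ∘ g)⁻¹) ⊆ Sing(f⁻¹) ∪ Sing(g⁻¹)`, and `(f ∘ g)ⁿ = fⁿ ∘ gⁿ = gⁿ ∘ fⁿ` by permutability. -/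

theorem eventually_notMem_of_tendsto_comp {ι X Y : Type*} [TopologicalSpace X]
    [TopologicalSpace Y] [T2Space Y] {l : Filter ι} {u : ι → X} {f : X → Y} {K : Set X} {y : Y}
    (hK : IsCompact K) (hf : ContinuousOn f K) (hy : y ∉ f '' K)
    (hu : Tendsto (f ∘ u) l (𝓝 y)) : ∀ᶠ i in l, u i ∉ K :=
  (hu.eventually ((hK.image_of_continuousOn hf).isClosed.isOpen_compl.mem_nhds hy)).mono
    fun _ hi hiK => hi (mem_image_of_mem f hiK)

section Trapping

open Metric

variable {E : Type*} [MetricSpace E] {δ : ℝ → E} {w : E} {a : ℝ}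

theorem eventually_mem_ball_of_frequently_of_eventually_notMem_sphere {r : ℝ}
    (hδ : ContinuousOn δ (Ici a)) (hfreq : ∃ᶠ t in atTop, δ t ∈ ball w r)
    (hsphere : ∀ᶠ t in atTop, δ t ∉ sphere w r) : ∀ᶠ t in atTop, δ t ∈ ball w r := by
  obtain ⟨T, hT⟩ := (hsphere.and (eventually_ge_atTop a)).exists_forall_of_atTop
  obtain ⟨t₀, hTt₀, ht₀⟩ := frequently_atTop.1 hfreq T
  filter_upwards [eventually_ge_atTop t₀] with s hs
  by_contra hout
  have hcont : ContinuousOn (fun u => dist (δ u) w) (Icc t₀ s) :=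
    (continuous_id.dist continuous_const).comp_continuousOn
      (hδ.mono fun u hu => (hT t₀ hTt₀).2.trans hu.1)
  obtain ⟨u, hu, hur⟩ :=
    intermediate_value_Icc hs hcont ⟨(mem_ball.1 ht₀).le, not_lt.1 hout⟩
  exact (hT u (hTt₀.trans hu.1)).1 (mem_sphere.2 hur)

theorem tendsto_of_mapClusterPt_of_tendsto_comp [ProperSpace E] {Y : Type*} [TopologicalSpace Y]
    [T2Space Y] {f : E → Y} (hδ : ContinuousOn δ (Ici a)) (hf : Continuous f)
    (hiso : ∀ᶠ z in 𝓝[≠] w, f z ≠ f w) (hw : MapClusterPt w atTop δ)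
    (hfδ : Tendsto (f ∘ δ) atTop (𝓝 (f w))) : Tendsto δ atTop (𝓝 w) := by
  obtain ⟨r₀, hr₀, hne⟩ := mem_nhdsWithin_iff.1 hiso
  refine nhds_basis_ball.tendsto_right_iff.2 fun ε hε => ?_
  set r := min ε (r₀ / 2)
  have hr : 0 < r := lt_min hε (half_pos hr₀)
  have hsphere : sphere w r ⊆ ball w r₀ ∩ {w}ᶜ := fun z hz =>
    ⟨mem_ball.2 ((mem_sphere.1 hz).trans_lt ((min_le_right _ _).trans_lt (half_lt_self hr₀))),
      ne_of_mem_sphere hz hr.ne'⟩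
  refine (eventually_mem_ball_of_frequently_of_eventually_notMem_sphere hδ
    (mapClusterPt_iff_frequently.1 hw _ (ball_mem_nhds w hr)) ?_).mono
    fun t ht => ball_subset_ball (min_le_left _ _) ht
  refine eventually_notMem_of_tendsto_comp (isCompact_sphere w r) hf.continuousOn ?_ hfδ
  rintro ⟨z, hz, hzw⟩
  exact hne (hsphere hz) hzw

end Trapping

theorem TranscendentalEntire.eventually_ne {f : ℂ → ℂ} (hf : TranscendentalEntire f) (w : ℂ) :
    ∀ᶠ z in 𝓝[≠] w, f z ≠ f w := by
  refine ((hf.1.analyticAt w).eventually_eq_or_eventually_ne analyticAt_const).resolve_left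
    fun hconst => hf.2 ⟨Polynomial.C (f w), fun z => ?_⟩
  rw [Polynomial.eval_C]
  exact congrFun (AnalyticOnNhd.eq_of_eventuallyEq (fun z _ => hf.1.analyticAt z)
    analyticOnNhd_const hconst) z

theorem criticalValues_comp_subset {f g : ℂ → ℂ} (hf : Differentiable ℂ f)
    (hg : Differentiable ℂ g) :
    criticalValues (f ∘ g) ⊆ criticalValues f ∪ f '' criticalValues g := by
  rintro _ ⟨w, hw, rfl⟩
  rw [deriv_comp w hf.differentiableAt hg.differentiableAt, mul_eq_zero] at hw
  exact hw.imp (fun h => ⟨g w, h, rfl⟩) fun h => ⟨g w, ⟨w, h, rfl⟩, rfl⟩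

theorem asymptoticValues_comp_subset {f g : ℂ → ℂ} (hf : Continuous f)
    (hiso : ∀ w, ∀ᶠ z in 𝓝[≠] w, f z ≠ f w) (hg : Continuous g) :
    asymptoticValues (f ∘ g) ⊆ asymptoticValues f ∪ f '' asymptoticValues g := by
  rintro v ⟨γ, hγ, hγ_inf, hv⟩
  have hδ : ContinuousOn (g ∘ γ) (Ici 0) := hg.comp_continuousOn hγ
  by_cases hδ_inf : Tendsto (fun t => ‖g (γ t)‖) atTop atTop
  · exact Or.inl ⟨g ∘ γ, hδ, hδ_inf, hv⟩
  obtain ⟨R, hR⟩ : ∃ R, ∃ᶠ t in atTop, ‖g (γ t)‖ < R := by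
    simpa [tendsto_atTop, frequently_atTop] using hδ_inf
  obtain ⟨w, -, hw⟩ := (isCompact_closedBall (0 : ℂ) R).exists_mapClusterPt_of_frequently
    (hR.mono fun t ht => mem_closedBall_zero_iff.2 ht.le)
  obtain rfl : f w = v := eq_of_nhds_neBot ((hw.continuousAt_comp hf.continuousAt).clusterPt.mono hv)
  exact Or.inr ⟨w, ⟨γ, hγ, hγ_inf, tendsto_of_mapClusterPt_of_tendsto_comp hδ hf (hiso w) hw hv⟩,
    rfl⟩

theorem singInv_comp_subset {f g : ℂ → ℂ} (hf : TranscendentalEntire f) (hg : Differentiable ℂ g)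
    (hfg : f '' SingInv g ⊆ SingInv g) : SingInv (f ∘ g) ⊆ SingInv f ∪ SingInv g := by
  have hSf : criticalValues f ∪ asymptoticValues f ⊆ SingInv f := subset_closure
  have hSg : criticalValues g ∪ asymptoticValues g ⊆ SingInv g := subset_closure
  refine closure_minimal (union_subset ?_ ?_) (isClosed_closure.union isClosed_closure)
  · exact (criticalValues_comp_subset hf.1 hg).trans <| union_subset_union
      (subset_union_left.trans hSf) ((image_mono (subset_union_left.trans hSg)).trans hfg)
  · exact (asymptoticValues_comp_subset hf.1.continuous hf.eventually_ne hg.continuous).trans <|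
      union_subset_union (subset_union_right.trans hSf)
        ((image_mono (subset_union_right.trans hSg)).trans hfg)

theorem iterate_mem_postSing {f : ℂ → ℂ} {z : ℂ} (hz : z ∈ SingInv f) (n : ℕ) :
    f^[n] z ∈ postSing f :=
  subset_closure (mem_iUnion_of_mem n (mem_image_of_mem _ hz))

theorem postSing_comp_subset_general
    (f g : ℂ → ℂ) (hf : TranscendentalEntire f) (hg : TranscendentalEntire g)
    (hperm : f ∘ g = g ∘ f)
    (h1 : f '' SingInv g ⊆ SingInv g) (h2 : g '' SingInv f ⊆ SingInv f) :
    postSing (f ∘ g) ⊆ postSing f ∪ postSing g := by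
  have hcomm : Function.Commute f g := congrFun hperm
  refine closure_minimal (iUnion_subset fun n => ?_) (isClosed_closure.union isClosed_closure)
  rintro _ ⟨z, hz, rfl⟩
  rcases singInv_comp_subset hf hg.1 h1 hz with hz | hz
  · left
    rw [hcomm.comp_iterate, comp_apply]
    exact iterate_mem_postSing ((mapsTo_iff_image_subset.2 h2).iterate n hz) n
  · right
    rw [hperm, hcomm.symm.comp_iterate, comp_apply]
    exact iterate_mem_postSing ((mapsTo_iff_image_subset.2 h1).iterate n hz) n

/-- For permutable transcendental entire functions `f, g` of bounded type
with `f(Sing(g⁻¹)) ⊆ Sing(g⁻¹)` and `g(Sing(f⁻¹)) ⊆ Sing(f⁻¹)`, one has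
`P(f∘g) ⊆ P(f) ∪ P(g)`. -/
theorem postSing_comp_subset
    (f g : ℂ → ℂ) (hf : TranscendentalEntire f) (hg : TranscendentalEntire g)
    (hperm : f ∘ g = g ∘ f) (hbf : BoundedType f) (hbg : BoundedType g)
    (h1 : f '' SingInv g ⊆ SingInv g) (h2 : g '' SingInv f ⊆ SingInv f) :
    postSing (f ∘ g) ⊆ postSing f ∪ postSing g :=
  postSing_comp_subset_general f g hf hg hperm h1 h2
end
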